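/- Let K, P, C be finite types with C nonempty, let pK : K → ℝ and pP : P → ℝ be probability distributions, and let e : K → P → C be an encryption rule such that e(k) : P → C is injective for every k ∈ K. With q, pC, r and the key equivocation H(K | C) = H(r) − H(pC) defined as in the key-equivocation identity, one has H(K | C) ≥ H(pK) + H(pP) − log₂ |C|, where |C| is the cardinality of C. -/

import Mathlib

/-! Since every `e k` is injective, `(k, p) ↦ (k, e k p)` only relabels the joint distribution
`q`, so `H(r) = H(q) = H(pK) + H(pP)` by independence, while `H(pC) ≤ log₂ |C|` by Jensen's
inequality for the concave function `x ↦ -x log x`. -/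

/-- The Shannon entropy (base 2) of a probability distribution on a finite type, with the
convention `0 · log₂ 0 = 0` (automatic since `Real.logb 2 0 = 0`). -/
noncomputable def shannonEntropy {α : Type*} [Fintype α] (p : α → ℝ) : ℝ :=
  -∑ a, p a * Real.logb 2 (p a)

open Real Finset

section Entropy

variable {α β : Type*} [Fintype α] [Fintype β]

lemma shannonEntropy_eq_sum_negMulLog_div (p : α → ℝ) :
    shannonEntropy p = (∑ a, negMulLog (p a)) / log 2 := by
  simp only [shannonEntropy, negMulLog, logb, sum_div, ← sum_neg_distrib]
  exact sum_congr rfl fun a _ => by ring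

lemma sum_negMulLog_le_log_card {p : α → ℝ} (h0 : ∀ a, 0 ≤ p a) (h1 : ∑ a, p a = 1) :
    ∑ a, negMulLog (p a) ≤ log (Fintype.card α) := by
  have : Nonempty α := univ_nonempty_iff.mp (nonempty_of_sum_ne_zero (h1 ▸ one_ne_zero))
  have hn : (0 : ℝ) < Fintype.card α := by exact_mod_cast Fintype.card_pos
  have jensen := concaveOn_negMulLog.le_map_sum (t := univ) (w := fun _ => (Fintype.card α : ℝ)⁻¹)
    (p := p) (fun _ _ => by positivity) (by simp [hn.ne']) (fun a _ => h0 a)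
  simp only [smul_eq_mul, ← mul_sum, h1, mul_one] at jensen
  have h_uniform :
      negMulLog (Fintype.card α : ℝ)⁻¹ = (Fintype.card α : ℝ)⁻¹ * log (Fintype.card α) := by
    rw [negMulLog, log_inv]
    ring
  exact le_of_mul_le_mul_left (jensen.trans_eq h_uniform) (inv_pos.2 hn)

lemma shannonEntropy_le_logb_card {p : α → ℝ} (h0 : ∀ a, 0 ≤ p a) (h1 : ∑ a, p a = 1) :
    shannonEntropy p ≤ logb 2 (Fintype.card α) := by
  rw [shannonEntropy_eq_sum_negMulLog_div, logb]
  exact div_le_div_of_nonneg_right (sum_negMulLog_le_log_card h0 h1) (log_nonneg one_le_two)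

lemma shannonEntropy_mul {p : α → ℝ} {q : β → ℝ} (hp : ∑ a, p a = 1) (hq : ∑ b, q b = 1) :
    shannonEntropy (fun x : α × β => p x.1 * q x.2) = shannonEntropy p + shannonEntropy q := by
  simp only [shannonEntropy_eq_sum_negMulLog_div, ← add_div, negMulLog_mul, Fintype.sum_prod_type,
    sum_add_distrib, ← sum_mul, ← mul_sum, hp, hq, one_mul]

lemma shannonEntropy_of_injective {q : α → ℝ} {r : β → ℝ} {f : α → β} (hf : f.Injective)
    (hr : ∀ b ∉ Set.range f, r b = 0) (hqr : ∀ a, q a = r (f a)) :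
    shannonEntropy q = shannonEntropy r := by
  unfold shannonEntropy
  congr 1
  exact Fintype.sum_of_injective f hf _ _ (fun b hb => by simp [hr b hb]) (fun a => by rw [hqr])

end Entropy

theorem key_equivocation_lower_bound_general {K P C : Type*} [Fintype K] [Fintype P] [Fintype C]
    [DecidableEq C]
    (pK : K → ℝ) (hK0 : ∀ k, 0 ≤ pK k) (hK1 : ∑ k, pK k = 1)
    (pP : P → ℝ) (hP0 : ∀ p, 0 ≤ pP p) (hP1 : ∑ p, pP p = 1)
    (e : K → P → C) (he : ∀ k, Function.Injective (e k))
    (q : K × P → ℝ) (hq : ∀ x, q x = pK x.1 * pP x.2)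
    (pC : C → ℝ)
    (hpC : ∀ c, pC c = ∑ x ∈ Finset.univ.filter (fun x : K × P => e x.1 x.2 = c), q x)
    (r : K × C → ℝ)
    (hr : ∀ k c, r (k, c) = ∑ p ∈ Finset.univ.filter (fun p : P => e k p = c), q (k, p)) :
    shannonEntropy r - shannonEntropy pC ≥
      shannonEntropy pK + shannonEntropy pP - Real.logb 2 (Fintype.card C) := by
  obtain rfl : q = fun x => pK x.1 * pP x.2 := funext hq
  have hr_entropy : shannonEntropy r = shannonEntropy pK + shannonEntropy pP := by
    rw [← shannonEntropy_mul hK1 hP1]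
    refine (shannonEntropy_of_injective (f := fun x => (x.1, e x.1 x.2)) ?_ ?_ ?_).symm
    · rintro ⟨k, p⟩ ⟨k', p'⟩ h
      obtain ⟨rfl, h⟩ := Prod.mk.inj h
      exact congrArg _ (he k h)
    · rintro ⟨k, c⟩ hc
      rw [hr]
      refine sum_eq_zero fun p hp => absurd ⟨(k, p), ?_⟩ hc
      simp [(mem_filter.mp hp).2]
    · rintro ⟨k, p⟩
      rw [hr, sum_eq_single_of_mem p (by simp)
        fun p' hp' hne => absurd (he k (mem_filter.mp hp').2) hne]
  have hpC_entropy : shannonEntropy pC ≤ logb 2 (Fintype.card C) := by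
    refine shannonEntropy_le_logb_card (fun c => ?_) ?_
    · rw [hpC]
      exact sum_nonneg fun x _ => mul_nonneg (hK0 _) (hP0 _)
    · simp only [hpC, sum_fiberwise, Fintype.sum_prod_type, ← mul_sum, hP1, mul_one, hK1]
  linarith

/-- Lower bound on the key equivocation (Eq. (9) of the paper): for a cryptosystem with
injective encryption rules and independently drawn key and plaintext,
`H(K | C) = H(r) − H(pC) ≥ H(pK) + H(pP) − log₂ |C|`. -/
theorem key_equivocation_lower_bound {K P C : Type*} [Fintype K] [Fintype P] [Fintype C]
    [Nonempty C] [DecidableEq C]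
    (pK : K → ℝ) (hK0 : ∀ k, 0 ≤ pK k) (hK1 : ∑ k, pK k = 1)
    (pP : P → ℝ) (hP0 : ∀ p, 0 ≤ pP p) (hP1 : ∑ p, pP p = 1)
    (e : K → P → C) (he : ∀ k, Function.Injective (e k))
    (q : K × P → ℝ) (hq : ∀ x, q x = pK x.1 * pP x.2)
    (pC : C → ℝ)
    (hpC : ∀ c, pC c = ∑ x ∈ Finset.univ.filter (fun x : K × P => e x.1 x.2 = c), q x)
    (r : K × C → ℝ)
    (hr : ∀ k c, r (k, c) = ∑ p ∈ Finset.univ.filter (fun p : P => e k p = c), q (k, p)) :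
    shannonEntropy r - shannonEntropy pC ≥
      shannonEntropy pK + shannonEntropy pP - Real.logb 2 (Fintype.card C) :=
  key_equivocation_lower_bound_general pK hK0 hK1 pP hP0 hP1 e he q hq pC hpC r hr
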